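/- For the Request-Response game Γ_k = (G_k, Ω_k) on the graph G_k (where Player 1 first makes k binary choices between P_i and P'_i vertices from v to w, then Player 0 makes k binary choices between R_i and R'_i vertices from w through x to the self-looping vertex y at which all pairs are responded to), Player 0 wins from v, and every positional winning strategy in the simulating Büchi game Γ'_k = (G'_k, F') from (∅,1,0,v) that reaches a final vertex as soon as possible (an attractor strategy) yields a winning strategy f_k for Player 0 in Γ_k from v whose finite-state implementation requires memory of size at least 2^k: it must mimic each of the k decisions of Player 1, i.e., move to the R_i-vertex iff Player 1 moved to the P_i-vertex. -/

import Mathlib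

/-!
Every play of `G_k` ends in `y`, where all requests `P_i`, `P'_i` are answered, and a play through
`v` reaches `w` before it leaves Player 1's part of the graph; so every play satisfies `Ω_k`, and
Player 0 wins with any strategy.

For the memory bound, fix Player 1's choices `b : Fin k → Bool` and follow the play in which
Player 0 answers them. At `wv i` the simulation memory has marker `2i`, and from there the lifted
play reaches a final vertex in `2(k-i)+1` steps, so an attractor strategy must move to attractor
level `2(k-i)`. The potential `rrPotential` (the distance of the marker to its last value, plus one
while the marker points to an open request) drops by at most one per step. Answering `R'_i`
instead of `R_i` blocks the marker at `2i+1` at once, answering `R_i` instead of `R'_i` blocks it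
at `2i+2` one step later; either way the target level is missed. So `f_k` answers every request as
Player 1 chose it, and a Mealy machine implementing `f_k` is in `2^k` different states on reaching
`w`, because its later outputs reveal `b`.
-/

set_option linter.unusedVariables false

namespace Games

/-- A game arena: a directed graph whose vertices are partitioned between
Player 0 (`owner v = false`) and Player 1 (`owner v = true`). -/
structure GameGraph (V : Type*) where
  E : V → V → Prop
  owner : V → Bool

/-- An infinite path through the game graph. -/
def IsPlay {V : Type*} (G : GameGraph V) (ρ : ℕ → V) : Prop :=
  ∀ i, G.E (ρ i) (ρ (i + 1))

/-- A property of positions holds infinitely often. -/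
def InfOften (p : ℕ → Prop) : Prop := ∀ n, ∃ m, n ≤ m ∧ p m

/-- The set of elements occurring infinitely often in a sequence. -/
def InfSet {α : Type*} (ρ : ℕ → α) : Set α := {u | InfOften fun i => ρ i = u}

/-- Game simulation (Definition 1 of the paper): the game `(G, φ)` is simulated by the
game `(G', φ')` on the extended vertex set `S × V` with initial memory content `s0`. -/
structure IsSimulation {V S : Type*} (G : GameGraph V) (φ : (ℕ → V) → Prop)
    (G' : GameGraph (S × V)) (φ' : (ℕ → S × V) → Prop) (s0 : S) : Prop where
  owner_eq : ∀ (s : S) (v : V), G'.owner (s, v) = G.owner v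
  edge_lift : ∀ (s : S) (v v' : V), G.E v v' → ∃ s', G'.E (s, v) (s', v')
  mem_unique : ∀ (s : S) (v : V) (p₁ p₂ : S × V), G'.E (s, v) p₁ → G'.E (s, v) p₂ → p₁.1 = p₂.1
  edge_proj : ∀ (s s' : S) (v v' : V), G'.E (s, v) (s', v') → G.E v v'
  win_iff : ∀ ρ : ℕ → V, IsPlay G ρ → ∀ ρ' : ℕ → S × V,
      ρ' 0 = (s0, ρ 0) → (∀ i, (ρ' i).2 = ρ i) → IsPlay G' ρ' → (φ ρ ↔ φ' ρ')

/-- A play is consistent with the (history-dependent) strategy `f` of Player 0. -/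
def StratConsistent {V : Type*} (G : GameGraph V) (f : List V → V → V) (ρ : ℕ → V) : Prop :=
  ∀ i, G.owner (ρ i) = false → ρ (i + 1) = f (List.ofFn fun j : Fin i => ρ j) (ρ i)

/-- Player 0 has a strategy from `v` forcing every resulting play to satisfy `ψ`. -/
def ForcesFrom {V : Type*} (G : GameGraph V) (ψ : (ℕ → V) → Prop) (v : V) : Prop :=
  ∃ f : List V → V → V, (∀ (h : List V) (u : V), G.owner u = false → G.E u (f h u)) ∧
    ∀ ρ : ℕ → V, ρ 0 = v → IsPlay G ρ → StratConsistent G f ρ → ψ ρ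

end Games
namespace Games

/-- Memory for the Büchi game simulating a Request-Response game with `k` pairs:
the set of currently open requests, a cyclic marker, and a flag that is set
exactly when the marker is reset to the first pair. -/
abbrev RRMem (k : ℕ) := Finset (Fin k) × Fin k × Bool

open scoped Classical in
/-- The memory update of the Request-Response-to-Büchi game simulation (Remark 2):
`P' = (P ∪ {j | v ∈ P_j}) \ {j | v ∈ R_j}`, the marker is kept if it is still open
and cyclically increased otherwise, and the flag records a reset of the marker. -/
noncomputable def updRR {V : Type*} {k : ℕ} [NeZero k] (P R : Fin k → Set V)
    (s : RRMem k) (v : V) : RRMem k :=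
  let P' := (s.1 ∪ Finset.univ.filter fun j => v ∈ P j) \ (Finset.univ.filter fun j => v ∈ R j)
  let i' := if s.2.1 ∈ P' then s.2.1 else s.2.1 + 1
  (P', i', decide (s.2.1.val = k - 1 ∧ i'.val = 0))

/-- The game graph `G'` of the Büchi game simulating the Request-Response game. -/
noncomputable def RRBuchiGraph {V : Type*} {k : ℕ} [NeZero k] (G : GameGraph V)
    (P R : Fin k → Set V) : GameGraph (RRMem k × V) where
  E := fun p p' => G.E p.2 p'.2 ∧ p'.1 = updRR P R p.1 p.2
  owner := fun p => G.owner p.2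

/-- The final vertices of the simulating Büchi game: those whose flag is set. -/
def RRFinal (k : ℕ) (V : Type*) : Set (RRMem k × V) := {p | p.1.2.2 = true}

/-- The Request-Response winning condition: every request is eventually responded. -/
def RRWin {V : Type*} {J : Type*} (P R : J → Set V) (ρ : ℕ → V) : Prop :=
  ∀ (j : J) (i : ℕ), ρ i ∈ P j → ∃ i', i ≤ i' ∧ ρ i' ∈ R j

/-- The Büchi winning condition: the set `F` is visited infinitely often. -/
def BuchiWin {α : Type*} (F : Set α) (ρ : ℕ → α) : Prop := InfOften fun i => ρ i ∈ F

end Games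
namespace Games

/-- The vertices of the Request-Response example graph `G_k` (Figure 2): Player 1's
choice positions `vv i` (with `vv 0 = v`), the request vertices `pv i b` (`b = false`
for `P_i`, `b = true` for `P'_i`), Player 0's choice positions `wv i` (with `wv 0 = w`),
the response vertices `rv i b` (`R_i` resp. `R'_i`), and the vertices `x` and `y`. -/
inductive RRV (k : ℕ) : Type
  | vv (i : Fin k)
  | pv (i : Fin k) (b : Bool)
  | wv (i : Fin k)
  | rv (i : Fin k) (b : Bool)
  | x
  | y
deriving DecidableEq

/-- The edges of the example graph `G_k`. -/
def RRE (k : ℕ) : RRV k → RRV k → Prop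
  | .vv i, .pv i' _ => i = i'
  | .pv i _, .vv i' => i'.val = i.val + 1
  | .pv i _, .wv i' => i.val = k - 1 ∧ i'.val = 0
  | .wv i, .rv i' _ => i = i'
  | .rv i _, .wv i' => i'.val = i.val + 1
  | .rv i _, .x => i.val = k - 1
  | .x, .y => True
  | .y, .y => True
  | _, _ => False

/-- Vertex ownership in `G_k`: Player 1 owns the first half (the request phase),
Player 0 owns the rest. -/
def RROwner (k : ℕ) : RRV k → Bool
  | .vv _ => true
  | .pv _ _ => true
  | _ => false

/-- The example game graph `G_k`. -/
def RRGraph (k : ℕ) : GameGraph (RRV k) where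
  E := RRE k
  owner := RROwner k

/-- The request sets of `Ω_k`: index `0` is the pair `(P₀, R₀)` with `P₀ = {v}`; index
`2i+1` is `P_{i+1}` and index `2i+2` is `P'_{i+1}`. -/
def RRP (k : ℕ) (hk : 0 < k) : Fin (2 * k + 1) → Set (RRV k) := fun j =>
  if j.val = 0 then {RRV.vv ⟨0, hk⟩}
  else {RRV.pv ⟨(j.val - 1) / 2, by omega⟩ (decide ((j.val - 1) % 2 = 1))}

/-- The response sets of `Ω_k`: `R₀ = {w}`, and `R_{i}`, `R'_{i}` consist of the
corresponding response vertex together with `y` (at `y` all pairs are responded to). -/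
def RRR (k : ℕ) (hk : 0 < k) : Fin (2 * k + 1) → Set (RRV k) := fun j =>
  if j.val = 0 then {RRV.wv ⟨0, hk⟩}
  else {RRV.rv ⟨(j.val - 1) / 2, by omega⟩ (decide ((j.val - 1) % 2 = 1)), RRV.y}

/-- The levels of the `0`-attractor of the set `F`: from a vertex in level `n + 1`,
Player 0 can force a visit to `F` within `n + 1` steps. -/
def AttrLvl {W : Type*} (G : GameGraph W) (F : Set W) : ℕ → Set W
  | 0 => F
  | n + 1 => AttrLvl G F n ∪
      {u | (G.owner u = false ∧ ∃ u', G.E u u' ∧ u' ∈ AttrLvl G F n) ∨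
           (G.owner u = true ∧ (∃ u', G.E u u') ∧ ∀ u', G.E u u' → u' ∈ AttrLvl G F n)}

/-- A positional strategy that reaches the set `F` as soon as possible
(an attractor strategy). -/
def IsAttractorStrategy {W : Type*} (G : GameGraph W) (F : Set W) (f : W → W) : Prop :=
  ∀ (u : W) (n : ℕ), G.owner u = false → u ∈ AttrLvl G F (n + 1) → u ∉ AttrLvl G F n →
    f u ∈ AttrLvl G F n

/-- A Mealy machine (strategy automaton) with memory `M` over game positions `V`. -/
structure Mealy (V M : Type*) where
  m0 : M
  upd : M → V → M
  out : M → V → V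

/-- The memory state of a Mealy machine after reading the play prefix `ρ 0 ⋯ ρ (i-1)`. -/
def mSt {V M : Type*} (Mc : Mealy V M) (ρ : ℕ → V) : ℕ → M
  | 0 => Mc.m0
  | i + 1 => Mc.upd (mSt Mc ρ i) (ρ i)

end Games
namespace Games

/-- The memory contents attained along a play, under the deterministic memory update of
the Request-Response-to-Büchi game simulation, starting from memory content `s0`. -/
noncomputable def memTr {V : Type*} {n : ℕ} [NeZero n] (P R : Fin n → Set V)
    (s0 : RRMem n) (ρ : ℕ → V) : ℕ → RRMem n
  | 0 => s0
  | i + 1 => updRR P R (memTr P R s0 ρ i) (ρ i)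

section AttractorLevels

variable {W : Type*} (G : GameGraph W) (F : Set W)

theorem exists_ge_mem_of_decreasing {α : Type*} {ρ : ℕ → α} {D T : Set α} (d : α → ℕ)
    (h : ∀ n, ρ n ∈ D → ρ n ∉ T → ρ (n + 1) ∈ D ∧ d (ρ (n + 1)) < d (ρ n))
    {i : ℕ} (hi : ρ i ∈ D) : ∃ m, i ≤ m ∧ ρ m ∈ T := by
  induction hN : d (ρ i) using Nat.strong_induction_on generalizing i with
  | _ N ih =>
    by_cases hT : ρ i ∈ T
    · exact ⟨i, le_rfl, hT⟩
    · obtain ⟨hD, hd⟩ := h i hi hT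
      obtain ⟨m, hm, hmT⟩ := ih _ (hN ▸ hd) hD rfl
      exact ⟨m, by omega, hmT⟩

theorem attrLvl_subset_succ (n : ℕ) : AttrLvl G F n ⊆ AttrLvl G F (n + 1) :=
  Set.subset_union_left

theorem mem_attrLvl_succ_of_edge {n : ℕ} {u u' : W} (hown : G.owner u = false)
    (hE : G.E u u') (hu' : u' ∈ AttrLvl G F n) : u ∈ AttrLvl G F (n + 1) :=
  Or.inr (Or.inl ⟨hown, u', hE, hu'⟩)

theorem exists_edge_mem_attrLvl {n : ℕ} {u : W} (hown : G.owner u = false) (hu : u ∉ F)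
    (h : u ∈ AttrLvl G F (n + 1)) : ∃ u', G.E u u' ∧ u' ∈ AttrLvl G F n := by
  induction n with
  | zero =>
    rcases h with h | h | ⟨hown', -⟩
    · exact absurd h hu
    · exact h.2
    · simp [hown] at hown'
  | succ n ih =>
    rcases h with h | h | ⟨hown', -⟩
    · obtain ⟨u', hE, hu'⟩ := ih h
      exact ⟨u', hE, attrLvl_subset_succ G F n hu'⟩
    · exact h.2
    · simp [hown] at hown'

theorem mem_attrLvl_of_isPlay {ρ : ℕ → W} (hρ : IsPlay G ρ) {a n : ℕ}
    (hown : ∀ j < n, G.owner (ρ (a + j)) = false) (hF : ρ (a + n) ∈ F) :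
    ρ a ∈ AttrLvl G F n := by
  induction n generalizing a with
  | zero => exact hF
  | succ n ih =>
    refine mem_attrLvl_succ_of_edge G F (hown 0 n.succ_pos) (hρ a) (ih ?_ ?_)
    · intro j hj
      simpa [Nat.add_assoc, Nat.add_comm 1] using hown (j + 1) (by omega)
    · simpa [Nat.add_assoc, Nat.add_comm 1] using hF

theorem le_of_mem_attrLvl (L : W → ℕ) (hF : ∀ u ∈ F, L u = 0)
    (hE : ∀ u u', G.E u u' → L u ≤ L u' + 1) {n : ℕ} {u : W} (hu : u ∈ AttrLvl G F n) :
    L u ≤ n := by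
  induction n generalizing u with
  | zero => exact (hF u hu).le
  | succ n ih =>
    rcases hu with hu | ⟨-, u', hE', hu'⟩ | ⟨-, ⟨u', hE'⟩, hall⟩
    · exact (ih hu).trans n.le_succ
    · exact (hE u u' hE').trans (by simpa using ih hu')
    · exact (hE u u' hE').trans (by simpa using ih (hall u' hE'))

end AttractorLevels

section Simulation

variable {V : Type*} {n : ℕ}

theorem Fin.val_add_one_eq_ite [NeZero n] (m : Fin n) :
    (m + 1).val = if m.val = n - 1 then 0 else m.val + 1 := by
  have hm := m.isLt
  rw [Fin.val_add, Fin.val_one', Nat.add_mod_mod]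
  split_ifs with h
  · rw [show m.val + 1 = n by omega, Nat.mod_self]
  · exact Nat.mod_eq_of_lt (by omega)

open Classical in
noncomputable def hitIndices (P : Fin n → Set V) (v : V) : Finset (Fin n) :=
  Finset.univ.filter fun j => v ∈ P j

theorem mem_hitIndices {P : Fin n → Set V} {v : V} {j : Fin n} :
    j ∈ hitIndices P v ↔ v ∈ P j := by
  classical
  simp [hitIndices]

variable [NeZero n] (P R : Fin n → Set V)

theorem updRR_mk (S : Finset (Fin n)) (m : Fin n) (fl : Bool) (v : V) :
    updRR P R (S, m, fl) v =
      ((S ∪ hitIndices P v) \ hitIndices R v,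
        if m ∈ (S ∪ hitIndices P v) \ hitIndices R v then m else m + 1,
        decide (m.val = n - 1 ∧
          (if m ∈ (S ∪ hitIndices P v) \ hitIndices R v then m else m + 1).val = 0)) :=
  rfl

theorem updRR_eq_of_mem (hn : 1 < n) {S : Finset (Fin n)} {m : Fin n} {fl : Bool} {v : V}
    (h : m ∈ (S ∪ hitIndices P v) \ hitIndices R v) :
    updRR P R (S, m, fl) v = ((S ∪ hitIndices P v) \ hitIndices R v, m, false) := by
  rw [updRR_mk, if_pos h]
  simp only [Prod.mk.injEq, decide_eq_false_iff_not, true_and]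
  omega

theorem updRR_eq_of_notMem {S : Finset (Fin n)} {m : Fin n} {fl : Bool} {v : V}
    (h : m ∉ (S ∪ hitIndices P v) \ hitIndices R v) :
    updRR P R (S, m, fl) v =
      ((S ∪ hitIndices P v) \ hitIndices R v, m + 1, decide (m.val = n - 1)) := by
  rw [updRR_mk, if_neg h, Fin.val_add_one_eq_ite]
  simp only [Prod.mk.injEq, true_and, decide_eq_decide]
  split_ifs <;> omega

theorem isPlay_memTr {G : GameGraph V} {ρ : ℕ → V} (hρ : IsPlay G ρ) (s0 : RRMem n) :
    IsPlay (RRBuchiGraph G P R) fun i => (memTr P R s0 ρ i, ρ i) :=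
  fun i => ⟨hρ i, rfl⟩

/-- A lower bound on the number of steps to a final vertex: the marker advances by at most one
per step, and not at all while it points to an open request. -/
noncomputable def rrPotential (u : RRMem n × V) : ℕ :=
  if u.1.2.2 then 0 else (n - u.1.2.1) + if u.1.2.1 ∈ (updRR P R u.1 u.2).1 then 1 else 0

theorem rrPotential_mk (S : Finset (Fin n)) (m : Fin n) (v : V) :
    rrPotential P R ((S, m, false), v) =
      (n - m) + if m ∈ (S ∪ hitIndices P v) \ hitIndices R v then 1 else 0 :=
  rfl

theorem rrPotential_le_succ (hn : 1 < n) (G : GameGraph V) {u u' : RRMem n × V}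
    (h : (RRBuchiGraph G P R).E u u') : rrPotential P R u ≤ rrPotential P R u' + 1 := by
  obtain ⟨⟨S, m, fl⟩, v⟩ := u
  obtain ⟨s', v'⟩ := u'
  obtain ⟨-, rfl : s' = updRR P R (S, m, fl) v⟩ := h
  cases fl
  · by_cases hm : m ∈ (S ∪ hitIndices P v) \ hitIndices R v
    · simp only [rrPotential, updRR_eq_of_mem P R hn hm, if_pos hm]
      simp
    · simp only [rrPotential, updRR_eq_of_notMem P R hm, if_neg hm, Fin.val_add_one_eq_ite]
      split_ifs <;> simp_all <;> omega
  · simp [rrPotential]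

theorem rrPotential_le_of_mem_attrLvl (hn : 1 < n) (G : GameGraph V) {u : RRMem n × V}
    {m : ℕ} (hu : u ∈ AttrLvl (RRBuchiGraph G P R) (RRFinal n V) m) :
    rrPotential P R u ≤ m :=
  le_of_mem_attrLvl _ _ (rrPotential P R) (fun _ hu => if_pos hu)
    (fun _ _ => rrPotential_le_succ P R hn G) hu

end Simulation

section ExampleGame

variable {k : ℕ}

/-- The index in `Ω_k` of the pair whose request is the vertex `pv i c`. -/
def reqIdx (i : Fin k) (c : Bool) : Fin (2 * k + 1) :=
  ⟨2 * i + 1 + c.toNat, by have := i.isLt; have := c.toNat_le; omega⟩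

@[simp]
theorem reqIdx_inj {i i' : Fin k} {c c' : Bool} :
    reqIdx i c = reqIdx i' c' ↔ i = i' ∧ c = c' := by
  simp only [reqIdx, Fin.ext_iff]
  cases c <;> cases c' <;> simp <;> omega

@[simp]
theorem reqIdx_ne_zero (i : Fin k) (c : Bool) : reqIdx i c ≠ 0 := by
  simp [reqIdx, Fin.ext_iff]

theorem exists_eq_reqIdx {j : Fin (2 * k + 1)} (hj : j.val ≠ 0) :
    ∃ i c, j = reqIdx i c := by
  refine ⟨⟨(j - 1) / 2, by omega⟩, decide ((j.val - 1) % 2 = 1), Fin.ext ?_⟩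
  by_cases h : (j.val - 1) % 2 = 1 <;> simp [reqIdx, h] <;> omega

theorem reqIdx_sub_one_div_two (i : Fin k) (c : Bool) : ((reqIdx i c).val - 1) / 2 = i := by
  cases c <;> simp [reqIdx]; omega

theorem reqIdx_sub_one_mod_two (i : Fin k) (c : Bool) :
    decide (((reqIdx i c).val - 1) % 2 = 1) = c := by
  cases c <;> simp [reqIdx]

def rank : RRV k → ℕ
  | .vv i => 4 * k + 1 - 2 * i
  | .pv i _ => 4 * k - 2 * i
  | .wv i => 2 * k + 1 - 2 * i
  | .rv i _ => 2 * k - 2 * i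
  | .x => 1
  | .y => 0

theorem rank_lt_of_RRE {u v : RRV k} (h : RRE k u v) (hu : u ≠ .y) : rank v < rank u := by
  cases u <;> cases v <;> simp_all [RRE, rank] <;> omega

theorem exists_RRE (u : RRV k) : ∃ v, RRE k u v := by
  cases u with
  | vv i => exact ⟨.pv i false, rfl⟩
  | pv i c =>
    by_cases h : i.val + 1 < k
    · exact ⟨.vv ⟨i + 1, h⟩, rfl⟩
    · exact ⟨.wv ⟨0, by omega⟩, show i.val = k - 1 ∧ 0 = 0 by omega⟩
  | wv i => exact ⟨.rv i false, rfl⟩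
  | rv i c =>
    by_cases h : i.val + 1 < k
    · exact ⟨.wv ⟨i + 1, h⟩, rfl⟩
    · exact ⟨.x, show i.val = k - 1 by omega⟩
  | x | y => exact ⟨.y, trivial⟩

theorem exists_eq_rv_of_RRE_wv {i : Fin k} {v : RRV k} (h : RRE k (.wv i) v) :
    ∃ c, v = .rv i c := by
  cases v <;> simp_all [RRE]

theorem RRE_rv_iff {i : Fin k} {c : Bool} {v : RRV k} :
    RRE k (.rv i c) v ↔ v = if h : i.val + 1 < k then .wv ⟨i + 1, h⟩ else .x := by
  have := i.isLt
  cases v with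
  | wv j =>
    have := j.isLt
    split_ifs <;> simp [RRE, Fin.ext_iff]
    omega
  | x => split_ifs <;> simp [RRE] <;> omega
  | _ => split_ifs <;> simp [RRE]

theorem eq_of_RRE_of_ne_wv {u v v' : RRV k} (hu : RROwner k u = false) (hw : ∀ i, u ≠ .wv i)
    (h : RRE k u v) (h' : RRE k u v') : v = v' := by
  cases u with
  | vv | pv => simp [RROwner] at hu
  | wv i => exact absurd rfl (hw i)
  | rv i c => exact (RRE_rv_iff.1 h).trans (RRE_rv_iff.1 h').symm
  | x | y => cases v <;> cases v' <;> simp_all [RRE]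

theorem RROwner_of_RRE_rv {i : Fin k} {c : Bool} {v : RRV k} (h : RRE k (.rv i c) v) :
    RROwner k v = false := by
  rw [RRE_rv_iff.1 h]
  split_ifs <;> rfl

variable (hk : 0 < k)

theorem mem_RRP_iff {v : RRV k} {j : Fin (2 * k + 1)} :
    v ∈ RRP k hk j ↔
      (j = 0 ∧ v = .vv ⟨0, hk⟩) ∨ ∃ i c, j = reqIdx i c ∧ v = .pv i c := by
  unfold RRP
  split_ifs with hj
  · obtain rfl : j = 0 := Fin.ext hj
    simp [eq_comm (a := (0 : Fin (2 * k + 1)))]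
  · obtain ⟨i, c, rfl⟩ := exists_eq_reqIdx hj
    simp [reqIdx_sub_one_div_two, reqIdx_sub_one_mod_two, -Bool.exists_bool]

theorem mem_RRR_iff {v : RRV k} {j : Fin (2 * k + 1)} :
    v ∈ RRR k hk j ↔
      (j = 0 ∧ v = .wv ⟨0, hk⟩) ∨ (j ≠ 0 ∧ v = .y) ∨
        ∃ i c, j = reqIdx i c ∧ v = .rv i c := by
  unfold RRR
  split_ifs with hj
  · obtain rfl : j = 0 := Fin.ext hj
    simp [eq_comm (a := (0 : Fin (2 * k + 1)))]
  · obtain ⟨i, c, rfl⟩ := exists_eq_reqIdx hj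
    simp [reqIdx_sub_one_div_two, reqIdx_sub_one_mod_two, -Bool.exists_bool, or_comm]

theorem mem_RRR_of_ne_zero {j : Fin (2 * k + 1)} (hj : j ≠ 0) : (RRV.y : RRV k) ∈ RRR k hk j :=
  (mem_RRR_iff hk).2 (Or.inr (Or.inl ⟨hj, rfl⟩))

theorem hitIndices_RRP_vv (i : Fin k) :
    hitIndices (RRP k hk) (.vv i) = if i.val = 0 then {0} else ∅ := by
  ext j
  split_ifs with hi
  · obtain rfl : i = ⟨0, hk⟩ := Fin.ext hi
    simp [mem_hitIndices, mem_RRP_iff]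
  · have : i ≠ ⟨0, hk⟩ := fun h => hi (by simp [h])
    simp [mem_hitIndices, mem_RRP_iff, this]

theorem hitIndices_RRP_pv (i : Fin k) (c : Bool) :
    hitIndices (RRP k hk) (.pv i c) = {reqIdx i c} := by
  ext j
  simp [mem_hitIndices, mem_RRP_iff]

theorem hitIndices_RRP_eq_empty {v : RRV k} (hv : RROwner k v = false) :
    hitIndices (RRP k hk) v = ∅ := by
  ext j
  cases v <;> simp_all [mem_hitIndices, mem_RRP_iff, RROwner]

theorem hitIndices_RRR_eq_empty {v : RRV k} (hv : RROwner k v = true) :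
    hitIndices (RRR k hk) v = ∅ := by
  ext j
  cases v <;> simp_all [mem_hitIndices, mem_RRR_iff, RROwner]

theorem hitIndices_RRR_wv (i : Fin k) :
    hitIndices (RRR k hk) (.wv i) = if i.val = 0 then {0} else ∅ := by
  ext j
  split_ifs with hi
  · obtain rfl : i = ⟨0, hk⟩ := Fin.ext hi
    simp [mem_hitIndices, mem_RRR_iff]
  · have : i ≠ ⟨0, hk⟩ := fun h => hi (by simp [h])
    simp [mem_hitIndices, mem_RRR_iff, this]

theorem hitIndices_RRR_rv (i : Fin k) (c : Bool) :
    hitIndices (RRR k hk) (.rv i c) = {reqIdx i c} := by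
  ext j
  simp [mem_hitIndices, mem_RRR_iff]

theorem hitIndices_RRR_x : hitIndices (RRR k hk) .x = ∅ := by
  ext j
  simp [mem_hitIndices, mem_RRR_iff]

theorem hitIndices_RRR_eq_empty_of_RRE_rv {i : Fin k} {c : Bool} {v : RRV k} (h : RRE k (.rv i c) v) :
    hitIndices (RRR k hk) v = ∅ := by
  rw [RRE_rv_iff.1 h]
  split_ifs
  · simp [hitIndices_RRR_wv]
  · exact hitIndices_RRR_x hk


theorem RROwner_or_eq_of_RRE {u v : RRV k} (h : RRE k u v) (hu : RROwner k u = true) :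
    RROwner k v = true ∨ v = .wv ⟨0, hk⟩ := by
  cases u <;> cases v <;> simp_all [RRE, RROwner, Fin.ext_iff]

theorem rrWin_of_isPlay {ρ : ℕ → RRV k} (hρ : IsPlay (RRGraph k) ρ) :
    RRWin (RRP k hk) (RRR k hk) ρ := by
  intro j i hi
  rcases (mem_RRP_iff hk).1 hi with ⟨rfl, hv⟩ | ⟨l, c, rfl, -⟩
  · obtain ⟨m, hm, hw⟩ := exists_ge_mem_of_decreasing (i := i)
      (D := {u | RROwner k u = true ∨ u = .wv ⟨0, hk⟩}) (T := {.wv ⟨0, hk⟩}) rank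
      (fun n hD hT => by
        have hown : RROwner k (ρ n) = true := hD.resolve_right hT
        exact ⟨RROwner_or_eq_of_RRE hk (hρ n) hown,
          rank_lt_of_RRE (hρ n) fun h => by simp [h, RROwner] at hown⟩)
      (Or.inl (by simp [hv, RROwner]))
    exact ⟨m, hm, (mem_RRR_iff hk).2 (Or.inl ⟨rfl, hw⟩)⟩
  · obtain ⟨m, hm, hy⟩ := exists_ge_mem_of_decreasing (D := Set.univ) (T := {.y}) rank
      (i := i) (fun n _ hT => ⟨trivial, rank_lt_of_RRE (hρ n) hT⟩) trivial
    exact ⟨m, hm, hy ▸ mem_RRR_of_ne_zero hk (reqIdx_ne_zero l c)⟩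

theorem forcesFrom_rrWin : ForcesFrom (RRGraph k) (RRWin (RRP k hk) (RRR k hk)) (.vv ⟨0, hk⟩) :=
  ⟨fun _ u => (exists_RRE u).choose, fun _ u _ => (exists_RRE u).choose_spec,
    fun _ _ hρ _ => rrWin_of_isPlay hk hρ⟩

end ExampleGame

section ChoicePlay

variable {k : ℕ}

/-- The play of `G_k` in which Player 1 requests `P_i` or `P'_i` according to `b i`
and Player 0 answers each request with the matching response vertex. -/
def choicePlay (b : Fin k → Bool) (n : ℕ) : RRV k :=
  if h : n < 2 * k then
    if n % 2 = 0 then .vv ⟨n / 2, by omega⟩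
    else .pv ⟨n / 2, by omega⟩ (b ⟨n / 2, by omega⟩)
  else if h' : n < 4 * k then
    if n % 2 = 0 then .wv ⟨(n - 2 * k) / 2, by omega⟩
    else .rv ⟨(n - 2 * k) / 2, by omega⟩ (b ⟨(n - 2 * k) / 2, by omega⟩)
  else if n = 4 * k then .x else .y

variable (b : Fin k → Bool) (i : Fin k)

theorem choicePlay_vv : choicePlay b (2 * i) = .vv i := by
  simp [choicePlay, i.isLt]

theorem choicePlay_pv : choicePlay b (2 * i + 1) = .pv i (b i) := by
  have hi := i.isLt
  have e : ∀ h, (⟨(2 * i.val + 1) / 2, h⟩ : Fin k) = i :=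
    fun _ => Fin.ext (show (2 * i.val + 1) / 2 = i.val by omega)
  simp [choicePlay, show 2 * i.val + 1 < 2 * k by omega, Nat.add_mod, e]

theorem choicePlay_wv : choicePlay b (2 * k + 2 * i) = .wv i := by
  have hi := i.isLt
  simp [choicePlay, show 2 * k + 2 * i.val < 4 * k by omega]

theorem choicePlay_rv : choicePlay b (2 * k + 2 * i + 1) = .rv i (b i) := by
  have hi := i.isLt
  have e : ∀ h, (⟨(2 * k + 2 * i.val + 1 - 2 * k) / 2, h⟩ : Fin k) = i :=
    fun _ => Fin.ext (show (2 * k + 2 * i.val + 1 - 2 * k) / 2 = i.val by omega)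
  simp [choicePlay, show 2 * k + 2 * i.val + 1 < 4 * k by omega,
    show ¬2 * k + 2 * i.val + 1 < 2 * k by omega, Nat.add_mod, e]

theorem choicePlay_x : choicePlay b (4 * k) = .x := by
  simp [choicePlay, show ¬ 4 * k < 2 * k by omega]

theorem choicePlay_eq_wv_iff {n : ℕ} : choicePlay b n = .wv i ↔ n = 2 * k + 2 * i := by
  constructor
  · unfold choicePlay
    split_ifs <;> simp [Fin.ext_iff]
    omega
  · rintro rfl
    exact choicePlay_wv b i

theorem RROwner_choicePlay {n : ℕ} : RROwner k (choicePlay b n) = false ↔ 2 * k ≤ n := by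
  unfold choicePlay
  split_ifs <;> simp [RROwner] <;> omega

theorem isPlay_choicePlay : IsPlay (RRGraph k) (choicePlay b) := by
  intro n
  show RRE k _ _
  unfold choicePlay
  split_ifs <;> simp [RRE, Fin.ext_iff] <;> omega

end ChoicePlay

section ChoiceMemory

variable {k : ℕ}

def reqsBelow (b : Fin k → Bool) (i : ℕ) : Finset (Fin (2 * k + 1)) :=
  (Finset.univ.filter fun l : Fin k => l.val < i).image fun l => reqIdx l (b l)

def reqsFrom (b : Fin k → Bool) (i : ℕ) : Finset (Fin (2 * k + 1)) :=
  (Finset.univ.filter fun l : Fin k => i ≤ l.val).image fun l => reqIdx l (b l)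

theorem reqIdx_mem_reqsFrom {b : Fin k → Bool} {i : ℕ} {l : Fin k} {c : Bool} :
    reqIdx l c ∈ reqsFrom b i ↔ i ≤ l ∧ b l = c := by
  simp [reqsFrom]

theorem zero_notMem_reqsFrom (b : Fin k → Bool) (i : ℕ) : 0 ∉ reqsFrom b i := by
  simp [reqsFrom]

theorem lt_val_of_mem_reqsFrom {b : Fin k → Bool} {i : ℕ} {j : Fin (2 * k + 1)}
    (hj : j ∈ reqsFrom b i) :
    2 * i < j.val := by
  obtain ⟨l, hl, rfl⟩ := Finset.mem_image.1 hj
  have := (Finset.mem_filter.1 hl).2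
  simp [reqIdx]
  omega

theorem reqsBelow_zero (b : Fin k → Bool) : reqsBelow b 0 = ∅ := by
  simp [reqsBelow]

theorem reqsBelow_succ (b : Fin k → Bool) {i : ℕ} (hi : i < k) :
    reqsBelow b (i + 1) = insert (reqIdx ⟨i, hi⟩ (b ⟨i, hi⟩)) (reqsBelow b i) := by
  have h :=
    Finset.image_insert (fun l => reqIdx l (b l)) ⟨i, hi⟩ (Finset.univ.filter (·.val < i))
  beta_reduce at h
  rw [reqsBelow, reqsBelow, ← h]
  congr 1
  ext l
  simp [Fin.ext_iff]
  omega

theorem reqsBelow_self (b : Fin k → Bool) : reqsBelow b k = reqsFrom b 0 := by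
  simp [reqsBelow, reqsFrom]

theorem reqsFrom_sdiff (b : Fin k → Bool) {i : ℕ} (hi : i < k) :
    reqsFrom b i \ {reqIdx ⟨i, hi⟩ (b ⟨i, hi⟩)} = reqsFrom b (i + 1) := by
  have h := Finset.image_erase (f := fun l => reqIdx l (b l))
    (fun l l' h => (reqIdx_inj.1 h).1) (Finset.univ.filter (i ≤ ·.val)) ⟨i, hi⟩
  beta_reduce at h
  rw [reqsFrom, reqsFrom, Finset.sdiff_singleton_eq_erase, ← h]
  congr 1
  ext l
  simp [Fin.ext_iff]
  omega

theorem reqsFrom_self (b : Fin k → Bool) : reqsFrom b k = ∅ := by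
  simp [reqsFrom]

variable (hk : 0 < k) (b : Fin k → Bool)

noncomputable abbrev choiceMem (n : ℕ) : RRMem (2 * k + 1) :=
  memTr (RRP k hk) (RRR k hk) (∅, 0, false) (choicePlay b) n

theorem choiceMem_succ (n : ℕ) :
    choiceMem hk b (n + 1) = updRR (RRP k hk) (RRR k hk) (choiceMem hk b n) (choicePlay b n) :=
  rfl

theorem updRR_of_RROwner_true {v : RRV k} (hv : RROwner k v = true)
    {S : Finset (Fin (2 * k + 1))} (h0 : 0 ∈ S ∪ hitIndices (RRP k hk) v) (fl : Bool) :
    updRR (RRP k hk) (RRR k hk) (S, 0, fl) v = (S ∪ hitIndices (RRP k hk) v, 0, false) := by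
  rw [updRR_eq_of_mem _ _ (by omega) (by simpa [hitIndices_RRR_eq_empty hk hv] using h0),
    hitIndices_RRR_eq_empty hk hv, Finset.sdiff_empty]

theorem choiceMem_pv : ∀ i, i < k →
    choiceMem hk b (2 * i + 1) = (insert 0 (reqsBelow b i), 0, false)
  | 0, _ => by
    have hv : choicePlay b 0 = .vv ⟨0, hk⟩ := choicePlay_vv b ⟨0, hk⟩
    rw [choiceMem_succ, show choiceMem hk b (2 * 0) = (∅, 0, false) from rfl, hv,
      updRR_of_RROwner_true hk rfl (by simp [hitIndices_RRP_vv]) _]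
    simp [hitIndices_RRP_vv, reqsBelow_zero]
  | i + 1, hi => by
    have hp : choicePlay b (2 * i + 1) = .pv ⟨i, by omega⟩ (b ⟨i, by omega⟩) :=
      choicePlay_pv b ⟨i, by omega⟩
    have hv : choicePlay b (2 * i + 1 + 1) = .vv ⟨i + 1, hi⟩ := choicePlay_vv b ⟨i + 1, hi⟩
    rw [show 2 * (i + 1) + 1 = 2 * i + 1 + 1 + 1 by ring, choiceMem_succ, choiceMem_succ,
      choiceMem_pv i (by omega), hp, hv,
      updRR_of_RROwner_true hk rfl (by simp) _, updRR_of_RROwner_true hk rfl (by simp) _]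
    rw [hitIndices_RRP_pv, hitIndices_RRP_vv, if_neg (by simp), reqsBelow_succ b (by omega)]
    simp

theorem choiceMem_w : choiceMem hk b (2 * k) = (insert 0 (reqsFrom b 0), 0, false) := by
  have hp : choicePlay b (2 * (k - 1) + 1) = .pv ⟨k - 1, by omega⟩ (b ⟨k - 1, by omega⟩) :=
    choicePlay_pv b ⟨k - 1, by omega⟩
  rw [show choiceMem hk b (2 * k) = choiceMem hk b (2 * (k - 1) + 1 + 1) by congr 1; omega,
    choiceMem_succ, choiceMem_pv hk b _ (by omega), hp, updRR_of_RROwner_true hk rfl (by simp) _,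
    hitIndices_RRP_pv, Finset.union_singleton, Finset.insert_comm, ← reqsBelow_succ,
    Nat.sub_add_cancel hk, reqsBelow_self]

theorem updRR_wv_zero :
    updRR (RRP k hk) (RRR k hk) (insert 0 (reqsFrom b 0), 0, false) (.wv ⟨0, hk⟩) =
      (reqsFrom b 0, ⟨1, by omega⟩, false) := by
  have hP := hitIndices_RRP_eq_empty hk (v := .wv ⟨0, hk⟩) rfl
  have hR : hitIndices (RRR k hk) (.wv ⟨0, hk⟩) = {0} := by simp [hitIndices_RRR_wv]
  rw [updRR_eq_of_notMem _ _ (by simp [hP, hR]), hP, hR, Finset.union_empty,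
    Finset.insert_sdiff_of_mem _ (Finset.mem_singleton_self 0),
    Finset.sdiff_singleton_eq_erase, Finset.erase_eq_of_notMem (zero_notMem_reqsFrom b 0)]
  simp [Fin.ext_iff]
  omega

theorem updRR_wv {i : ℕ} (hi : i < k) (hi0 : i ≠ 0) :
    updRR (RRP k hk) (RRR k hk) (reqsFrom b i, ⟨2 * i, by omega⟩, false) (.wv ⟨i, hi⟩) =
      (reqsFrom b i, ⟨2 * i + 1, by omega⟩, false) := by
  have hP := hitIndices_RRP_eq_empty hk (v := .wv ⟨i, hi⟩) rfl
  have hR : hitIndices (RRR k hk) (.wv ⟨i, hi⟩) = ∅ := by simp [hitIndices_RRR_wv, hi0]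
  rw [updRR_eq_of_notMem _ _ (by simp [hP, hR]; exact fun h => (lt_val_of_mem_reqsFrom h).ne rfl)]
  simp [hP, hR, Fin.ext_iff, Fin.val_add_one_eq_ite]
  omega

theorem updRR_rv {i : ℕ} (hi : i < k) :
    updRR (RRP k hk) (RRR k hk) (reqsFrom b i, ⟨2 * i + 1, by omega⟩, false)
        (.rv ⟨i, hi⟩ (b ⟨i, hi⟩)) =
      (reqsFrom b (i + 1), ⟨2 * (i + 1), by omega⟩, false) := by
  have hP := hitIndices_RRP_eq_empty hk (v := .rv ⟨i, hi⟩ (b ⟨i, hi⟩)) rfl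
  have hO : (reqsFrom b i ∪ hitIndices (RRP k hk) (.rv ⟨i, hi⟩ (b ⟨i, hi⟩))) \
      hitIndices (RRR k hk) (.rv ⟨i, hi⟩ (b ⟨i, hi⟩)) = reqsFrom b (i + 1) := by
    rw [hP, hitIndices_RRR_rv, Finset.union_empty, reqsFrom_sdiff]
  rw [updRR_eq_of_notMem _ _ (hO ▸ fun h => by have := lt_val_of_mem_reqsFrom h; simp at this),
    hO]
  simp [Fin.ext_iff, Fin.val_add_one_eq_ite]
  split_ifs <;> omega

theorem choiceMem_rv : ∀ i (hi : i < k),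
    choiceMem hk b (2 * k + 2 * i + 1) = (reqsFrom b i, ⟨2 * i + 1, by omega⟩, false)
  | 0, _ => by
    have hw : choicePlay b (2 * k) = .wv ⟨0, hk⟩ := choicePlay_wv b ⟨0, hk⟩
    show choiceMem hk b (2 * k + 1) = (_, ⟨1, by omega⟩, false)
    rw [choiceMem_succ, choiceMem_w, hw, updRR_wv_zero]
  | i + 1, hi => by
    have hr : choicePlay b (2 * k + 2 * i + 1) = .rv ⟨i, by omega⟩ (b ⟨i, by omega⟩) :=
      choicePlay_rv b ⟨i, by omega⟩
    have hw : choicePlay b (2 * k + 2 * i + 1 + 1) = .wv ⟨i + 1, hi⟩ :=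
      choicePlay_wv b ⟨i + 1, hi⟩
    rw [show 2 * k + 2 * (i + 1) + 1 = 2 * k + 2 * i + 1 + 1 + 1 by ring, choiceMem_succ,
      choiceMem_succ, choiceMem_rv i (by omega), hr, hw, updRR_rv, updRR_wv hk b hi (by omega)]

theorem choiceMem_after_rv {i : ℕ} (hi : i < k) :
    choiceMem hk b (2 * k + 2 * (i + 1)) =
      (reqsFrom b (i + 1), ⟨2 * (i + 1), by omega⟩, false) := by
  have hr : choicePlay b (2 * k + 2 * i + 1) = .rv ⟨i, hi⟩ (b ⟨i, hi⟩) :=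
    choicePlay_rv b ⟨i, hi⟩
  rw [show 2 * k + 2 * (i + 1) = 2 * k + 2 * i + 1 + 1 by ring, choiceMem_succ,
    choiceMem_rv hk b i hi, hr, updRR_rv]

theorem choiceMem_wv_snd (i : Fin k) :
    (choiceMem hk b (2 * k + 2 * i)).2 = (⟨2 * i, by omega⟩, false) := by
  obtain ⟨_ | i, hi⟩ := i
  · simp [choiceMem_w]
  · rw [choiceMem_after_rv hk b (by omega)]

theorem choiceMem_final : (choiceMem hk b (4 * k + 1)).2.2 = true := by
  have h4 : choiceMem hk b (4 * k) = (∅, ⟨2 * k, by omega⟩, false) := by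
    rw [show choiceMem hk b (4 * k) = choiceMem hk b (2 * k + 2 * (k - 1 + 1)) by congr 1; omega,
      choiceMem_after_rv hk b (by omega)]
    simp only [Nat.sub_add_cancel hk, reqsFrom_self]
  rw [choiceMem_succ, h4, choicePlay_x,
    updRR_eq_of_notMem _ _ (by simp [hitIndices_RRR_x, hitIndices_RRP_eq_empty hk (v := .x) rfl])]
  simp

end ChoiceMemory

section AttractorStrategy

variable {k : ℕ} (hk : 0 < k)

noncomputable abbrev simGraph : GameGraph (RRMem (2 * k + 1) × RRV k) :=
  RRBuchiGraph (RRGraph k) (RRP k hk) (RRR k hk)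

variable (b : Fin k → Bool)

theorem choiceMem_wv_mem_attrLvl (i : Fin k) :
    (choiceMem hk b (2 * k + 2 * i), RRV.wv i) ∈
      AttrLvl (simGraph hk) (RRFinal (2 * k + 1) (RRV k)) (2 * (k - i) + 1) := by
  have hi := i.isLt
  have h := mem_attrLvl_of_isPlay (simGraph hk) (RRFinal (2 * k + 1) (RRV k))
    (isPlay_memTr (RRP k hk) (RRR k hk) (isPlay_choicePlay b) (∅, 0, false))
    (a := 2 * k + 2 * i) (n := 2 * (k - i) + 1)
    (fun j _ => (RROwner_choicePlay b).2 (by omega))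
    (by rw [show 2 * k + 2 * i + (2 * (k - i) + 1) = 4 * k + 1 by omega]
        exact choiceMem_final hk b)
  rwa [choicePlay_wv] at h

theorem choiceMem_wv_notMem_attrLvl (i : Fin k) :
    (choiceMem hk b (2 * k + 2 * i), RRV.wv i) ∉
      AttrLvl (simGraph hk) (RRFinal (2 * k + 1) (RRV k)) (2 * (k - i)) := by
  intro h
  have hL := rrPotential_le_of_mem_attrLvl (RRP k hk) (RRR k hk) (by omega) (RRGraph k) h
  obtain ⟨S, hS⟩ : ∃ S, choiceMem hk b (2 * k + 2 * i) = (S, ⟨2 * i, by omega⟩, false) :=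
    ⟨_, Prod.ext rfl (choiceMem_wv_snd hk b i)⟩
  rw [hS, rrPotential_mk] at hL
  have := i.isLt
  simp only at hL
  omega

theorem wrongResponse_notMem_attrLvl (i : Fin k) :
    ((reqsFrom b i, ⟨2 * i + 1, by omega⟩, false), RRV.rv i (!b i)) ∉
      AttrLvl (simGraph hk) (RRFinal (2 * k + 1) (RRV k)) (2 * (k - i)) := by
  have hi := i.isLt
  have hfalse : reqIdx i false = ⟨2 * i + 1, by omega⟩ := rfl
  set S := reqsFrom b i
  intro h
  cases hb : b i
  · have hL := rrPotential_le_of_mem_attrLvl (RRP k hk) (RRR k hk) (by omega) (RRGraph k) h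
    rw [hb, Bool.not_false, rrPotential_mk, hitIndices_RRP_eq_empty hk rfl, hitIndices_RRR_rv,
      if_pos (by simp [← hfalse, S, reqIdx_mem_reqsFrom, hb])] at hL
    simp only at hL
    omega
  · -- the marker moves on to the request `P'_i`, which stays open for the next step
    rw [hb, Bool.not_true, show 2 * (k - i) = 2 * (k - i) - 1 + 1 by omega] at h
    obtain ⟨⟨s', v'⟩, ⟨hE, rfl⟩, hu'⟩ :=
      exists_edge_mem_attrLvl (simGraph hk) _ rfl Bool.false_ne_true h
    have hS : reqIdx i false ∉ S := by simp [S, reqIdx_mem_reqsFrom, hb]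
    rw [updRR_eq_of_notMem _ _ (by simp [hitIndices_RRR_rv, ← hfalse]),
      hitIndices_RRP_eq_empty hk rfl, hitIndices_RRR_rv, Finset.union_empty,
      Finset.sdiff_singleton_eq_erase, Finset.erase_eq_of_notMem hS] at hu'
    have hm : (⟨2 * i + 1, by omega⟩ : Fin (2 * k + 1)) + 1 = reqIdx i true :=
      Fin.ext (by simp [Fin.val_add_one_eq_ite, reqIdx]; omega)
    have hL := rrPotential_le_of_mem_attrLvl (RRP k hk) (RRR k hk) (by omega) (RRGraph k) hu'
    rw [hm, decide_eq_false (by simp; omega), rrPotential_mk,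
      hitIndices_RRP_eq_empty hk (RROwner_of_RRE_rv hE), hitIndices_RRR_eq_empty_of_RRE_rv hk hE,
      if_pos (by simp [S, reqIdx_mem_reqsFrom, hb])] at hL
    simp [reqIdx] at hL
    omega

variable {f' : RRMem (2 * k + 1) × RRV k → RRMem (2 * k + 1) × RRV k}

theorem attractor_response_eq
    (hleg : ∀ p, (simGraph hk).owner p = false → (simGraph hk).E p (f' p))
    (hattr : IsAttractorStrategy (simGraph hk) (RRFinal (2 * k + 1) (RRV k)) f') (i : Fin k) :
    (f' (choiceMem hk b (2 * k + 2 * i), .wv i)).2 = .rv i (b i) := by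
  have hi := i.isLt
  set u := (choiceMem hk b (2 * k + 2 * i), RRV.wv i)
  have hnext := hattr u _ rfl (choiceMem_wv_mem_attrLvl hk b i) (choiceMem_wv_notMem_attrLvl hk b i)
  obtain ⟨hE, hmem⟩ := hleg u rfl
  obtain ⟨c, hc⟩ := exists_eq_rv_of_RRE_wv hE
  rw [hc]
  by_contra hne
  have hfu : f' u = ((reqsFrom b i, ⟨2 * i + 1, by omega⟩, false), RRV.rv i (!b i)) := by
    have hupd : updRR (RRP k hk) (RRR k hk) u.1 u.2 = choiceMem hk b (2 * k + 2 * i + 1) := by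
      rw [choiceMem_succ, choicePlay_wv]
    refine Prod.ext (hmem.trans (hupd.trans (choiceMem_rv hk b i hi))) (hc.trans ?_)
    rw [Bool.eq_not.2 fun h : c = b i => hne (by rw [h])]
  exact wrongResponse_notMem_attrLvl hk b i (hfu ▸ hnext)

theorem choicePlay_consistent
    (hleg : ∀ p, (simGraph hk).owner p = false → (simGraph hk).E p (f' p))
    (hattr : IsAttractorStrategy (simGraph hk) (RRFinal (2 * k + 1) (RRV k)) f') (n : ℕ)
    (hn : RROwner k (choicePlay b n) = false) :
    choicePlay b (n + 1) = (f' (choiceMem hk b n, choicePlay b n)).2 := by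
  by_cases hw : ∃ i, choicePlay b n = .wv i
  · obtain ⟨i, hi⟩ := hw
    obtain rfl := (choicePlay_eq_wv_iff b i).1 hi
    rw [hi, attractor_response_eq hk b hleg hattr, choicePlay_rv]
  · exact eq_of_RRE_of_ne_wv hn (not_exists.1 hw) (isPlay_choicePlay b n)
      (hleg (choiceMem hk b n, choicePlay b n) hn).1

end AttractorStrategy

section Mealy

variable {k : ℕ} {M : Type*} (Mc : Mealy (RRV k) M)

theorem mSt_succ (ρ : ℕ → RRV k) (n : ℕ) : mSt Mc ρ (n + 1) = Mc.upd (mSt Mc ρ n) (ρ n) :=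
  rfl

theorem eq_of_mSt_choicePlay_eq
    (hout : ∀ (b : Fin k → Bool) (i : Fin k),
      Mc.out (mSt Mc (choicePlay b) (2 * k + 2 * i)) (.wv i) = .rv i (b i))
    {b b' : Fin k → Bool} (h : mSt Mc (choicePlay b) (2 * k) = mSt Mc (choicePlay b') (2 * k)) :
    b = b' := by
  have key : ∀ i ≤ k, mSt Mc (choicePlay b) (2 * k + 2 * i) =
      mSt Mc (choicePlay b') (2 * k + 2 * i) ∧ ∀ l : Fin k, l.val < i → b l = b' l := by
    intro i
    induction i with
    | zero => exact fun _ => ⟨h, fun l hl => absurd hl (Nat.not_lt_zero _)⟩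
    | succ i ih =>
      intro hik
      obtain ⟨hst, hlt⟩ := ih (by omega)
      have hbi : b ⟨i, hik⟩ = b' ⟨i, hik⟩ := by
        have := (hout b ⟨i, hik⟩).symm.trans (hst ▸ hout b' ⟨i, hik⟩)
        exact (RRV.rv.inj this).2
      refine ⟨?_, fun l hl => ?_⟩
      · have hw : ∀ b : Fin k → Bool, choicePlay b (2 * k + 2 * i) = .wv ⟨i, hik⟩ :=
          fun b => choicePlay_wv b ⟨i, hik⟩
        have hr : ∀ b : Fin k → Bool,
            choicePlay b (2 * k + 2 * i + 1) = .rv ⟨i, hik⟩ (b ⟨i, hik⟩) :=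
          fun b => choicePlay_rv b ⟨i, hik⟩
        rw [show 2 * k + 2 * (i + 1) = 2 * k + 2 * i + 1 + 1 by ring, mSt_succ, mSt_succ, mSt_succ,
          mSt_succ, hst, hw, hw, hr, hr, hbi]
      · rcases Nat.lt_succ_iff_lt_or_eq.1 hl with hl | hl
        · exact hlt l hl
        · obtain rfl : l = ⟨i, hik⟩ := Fin.ext hl
          exact hbi
  funext l
  exact (key k le_rfl).2 l l.isLt

end Mealy

/-- Theorem 2 of the paper. In the Request-Response example game
`Γ_k = (G_k, Ω_k)`, Player 0 wins from `v`, and every positional winning strategy of the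
simulating Büchi game `Γ'_k` from `((∅,1,0), v)` that reaches a final vertex as soon as
possible (an attractor strategy) yields, via the memory of the game simulation, a winning
strategy for Player 0 in `Γ_k` from `v` every finite-state implementation of which has at
least `2^k` memory states. -/
theorem rr_example_exponential_memory {k : ℕ} (hk : 0 < k) :
    ForcesFrom (RRGraph k) (RRWin (RRP k hk) (RRR k hk)) (RRV.vv ⟨0, hk⟩) ∧
    (∀ f' : RRMem (2 * k + 1) × RRV k → RRMem (2 * k + 1) × RRV k,
      -- `f'` is a (legal) positional strategy for Player 0 in `Γ'_k`
      (∀ p, (RRBuchiGraph (RRGraph k) (RRP k hk) (RRR k hk)).owner p = false →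
        (RRBuchiGraph (RRGraph k) (RRP k hk) (RRR k hk)).E p (f' p)) →
      -- `f'` is winning from `((∅,1,0), v)`
      (∀ ρ' : ℕ → RRMem (2 * k + 1) × RRV k,
        ρ' 0 = ((∅, 0, false), RRV.vv ⟨0, hk⟩) →
        IsPlay (RRBuchiGraph (RRGraph k) (RRP k hk) (RRR k hk)) ρ' →
        (∀ i, (RRBuchiGraph (RRGraph k) (RRP k hk) (RRR k hk)).owner (ρ' i) = false →
          ρ' (i + 1) = f' (ρ' i)) →
        BuchiWin (RRFinal (2 * k + 1) (RRV k)) ρ') →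
      -- `f'` reaches a final vertex as soon as possible
      IsAttractorStrategy (RRBuchiGraph (RRGraph k) (RRP k hk) (RRR k hk))
        (RRFinal (2 * k + 1) (RRV k)) f' →
      -- then the induced strategy `f_k` on `Γ_k` is winning from `v` ...
      ((∀ ρ : ℕ → RRV k, ρ 0 = RRV.vv ⟨0, hk⟩ → IsPlay (RRGraph k) ρ →
        (∀ i, RROwner k (ρ i) = false →
          ρ (i + 1) = (f' (memTr (RRP k hk) (RRR k hk) (∅, 0, false) ρ i, ρ i)).2) →
        RRWin (RRP k hk) (RRR k hk) ρ) ∧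
      -- ... and every Mealy machine implementing `f_k` has at least `2^k` states
      (∀ (M : Type) [Fintype M] (Mc : Mealy (RRV k) M),
        (∀ ρ : ℕ → RRV k, ρ 0 = RRV.vv ⟨0, hk⟩ → IsPlay (RRGraph k) ρ →
          (∀ i, RROwner k (ρ i) = false →
            ρ (i + 1) = (f' (memTr (RRP k hk) (RRR k hk) (∅, 0, false) ρ i, ρ i)).2) →
          ∀ i, RROwner k (ρ i) = false →
            Mc.out (mSt Mc ρ i) (ρ i) =
              (f' (memTr (RRP k hk) (RRR k hk) (∅, 0, false) ρ i, ρ i)).2) →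
        2 ^ k ≤ Fintype.card M))) := by
  refine ⟨forcesFrom_rrWin hk, fun f' hleg _ hattr =>
    ⟨fun ρ _ hρ _ => rrWin_of_isPlay hk hρ, fun M _ Mc hMc => ?_⟩⟩
  have hout (b : Fin k → Bool) (i : Fin k) :
      Mc.out (mSt Mc (choicePlay b) (2 * k + 2 * i)) (.wv i) = .rv i (b i) := by
    have h := hMc (choicePlay b) (choicePlay_vv b ⟨0, hk⟩) (isPlay_choicePlay b)
      (choicePlay_consistent hk b hleg hattr) (2 * k + 2 * i)
      ((RROwner_choicePlay b).2 (by omega))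
    rwa [choicePlay_wv, attractor_response_eq hk b hleg hattr] at h
  simpa using Fintype.card_le_of_injective _ fun b b' h => eq_of_mSt_choicePlay_eq Mc hout h

end Games
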